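/- Let (Σ,P) be a Kelvin–Planck theory with Clausius–Duhem pair (η⁰,T⁰), and let (v,w) ∈ V(Σ) satisfy ∫_Σ η⁰ dv − ∫_Σ (1/T⁰) dw = 0. If (v,w) is not a member of \hat{P}, then there exists another Clausius–Duhem pair (η,T) for (Σ,P) such that ∫_Σ η dv − ∫_Σ (1/T) dw < 0. -/

import Mathlib

open Set

noncomputable section

/-- Signed regular Borel measures on `X`, modeled via the Riesz representation
theorem as the weak-star dual of `C(X, ℝ)`. -/
abbrev Meas (X : Type*) [TopologicalSpace X] := WeakDual ℝ C(X, ℝ)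

/-- The ambient space containing `V(X) = M°(X) ⊕ M(X)`; membership in the
subspace `M°(X)` of the first component is expressed by `p.1 1 = 0`. -/
abbrev VSp (X : Type*) [TopologicalSpace X] := Meas X × Meas X

/-- The cone of nonnegative measures. -/
def PosMeas (X : Type*) [TopologicalSpace X] : Set (Meas X) :=
  {μ | ∀ f : C(X, ℝ), (∀ x, 0 ≤ f x) → 0 ≤ μ f}

variable {X : Type*} [TopologicalSpace X]

/-- The Dirac measure at a point, i.e. the evaluation functional. -/
def dirac (x : X) : Meas X :=
  (⟨⟨⟨fun f => f x, fun _ _ => rfl⟩, fun _ _ => rfl⟩,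
    continuous_eval_const x⟩ : C(X, ℝ) →L[ℝ] ℝ)

/-- The set of nonnegative multiples of members of `P`. -/
def coneOf (P : Set (VSp X)) : Set (VSp X) :=
  {x | ∃ c : ℝ, 0 ≤ c ∧ ∃ p ∈ P, x = c • p}

/-- `\hat P`, the weak-star closure of the cone generated by `P`. -/
def hatP (P : Set (VSp X)) : Set (VSp X) :=
  closure (coneOf P)

/-- A thermodynamical theory: processes have change of condition with total mass
zero (i.e. `P ⊆ V(X)`), and `\hat P` is convex. -/
def IsThermoTheory (P : Set (VSp X)) : Prop :=
  (∀ p ∈ P, p.1 (1 : C(X, ℝ)) = 0) ∧ Convex ℝ (hatP P)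

/-- A Kelvin–Planck theory: a thermodynamical theory with
`\hat P ∩ ({0} × M₊(X)) = {(0,0)}`. -/
def IsKelvinPlanck (P : Set (VSp X)) : Prop :=
  IsThermoTheory P ∧ hatP P ∩ (({0} : Set (Meas X)) ×ˢ PosMeas X) = {(0, 0)}

/-- A Clausius–Duhem pair `(η, T)` for the theory `P`: `η` and `T` are continuous,
`T` is strictly positive, and for every continuous `β` equal pointwise to `1/T`
(such a `β` exists, and is unique, by positivity of `T`), the Clausius–Duhem
inequality `∫ η d(Δm) ≥ ∫ (1/T) dq` holds for every process in `P`. -/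
def IsCDPair (P : Set (VSp X)) (η T : C(X, ℝ)) : Prop :=
  (∀ x, 0 < T x) ∧
    ∀ β : C(X, ℝ), (∀ x, β x = (T x)⁻¹) → ∀ p ∈ P, p.2 β ≤ p.1 η

/-- A Clausius–Duhem temperature scale. -/
def IsCDTemp (P : Set (VSp X)) (T : C(X, ℝ)) : Prop :=
  ∃ η : C(X, ℝ), IsCDPair P η T

/-- Two states are of the same hotness: both `(0, δ_a − δ_b)` and `(0, δ_b − δ_a)`
belong to `\hat P`. -/
def SameHotness (P : Set (VSp X)) (a b : X) : Prop :=
  ((0 : Meas X), dirac a - dirac b) ∈ hatP P ∧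
    ((0 : Meas X), dirac b - dirac a) ∈ hatP P

/-- The hotness level of a state. -/
def hotnessLevel (P : Set (VSp X)) (a : X) : Set X :=
  {b | SameHotness P a b}

/-- A subset of the state space that is a hotness level. -/
def IsHotnessLevel (P : Set (VSp X)) (h : Set X) : Prop :=
  ∃ a : X, h = hotnessLevel P a

/-- The (signed) measure `μ` is supported in the set `A`: `μ` annihilates every
continuous function vanishing on `A`. -/
def SuppIn (μ : Meas X) (A : Set X) : Prop :=
  ∀ f : C(X, ℝ), (∀ x ∈ A, f x = 0) → μ f = 0

/-- `\hat Q` contains a passive heat transfer from hotness level `h` to `h'`: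
an element `(0, μ − μ')` of `\hat Q` with `μ, μ'` nonnegative, `supp μ ⊆ h`,
`supp μ' ⊆ h'` and `μ(h) = μ'(h') > 0` (the common value being the total mass). -/
def IsPassiveHT (Q : Set (VSp X)) (h h' : Set X) : Prop :=
  ∃ μ μ' : Meas X, μ ∈ PosMeas X ∧ μ' ∈ PosMeas X ∧ SuppIn μ h ∧ SuppIn μ' h' ∧
    μ (1 : C(X, ℝ)) = μ' (1 : C(X, ℝ)) ∧ 0 < μ (1 : C(X, ℝ)) ∧
    ((0 : Meas X), μ - μ') ∈ hatP Q

/-- Hotness level `h'` is hotter than `h`: the levels are distinct and every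
thermodynamical theory whose closed process cone contains `P` together with a
passive heat transfer from `h` to `h'` fails to be a Kelvin–Planck theory. -/
def Hotter (P : Set (VSp X)) (h' h : Set X) : Prop :=
  h' ≠ h ∧ ∀ Pd : Set (VSp X), IsThermoTheory Pd → P ⊆ hatP Pd →
    IsPassiveHT Pd h h' → ¬ IsKelvinPlanck Pd

/-- State `a` is hotter than state `b`. -/
def HotterState (P : Set (VSp X)) (a b : X) : Prop :=
  Hotter P (hotnessLevel P a) (hotnessLevel P b)

/-- A Carnot element of the theory `P` operating between hotness levels `h'` and
`h`: a reversible cyclic element `(0, μ' − μ)` with `μ', μ` nonzero nonnegative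
measures supported in `h'`, `h` respectively. -/
def IsCarnotBetween (P : Set (VSp X)) (h' h : Set X) (p : VSp X) : Prop :=
  p ∈ hatP P ∧ -p ∈ hatP P ∧
    ∃ μ' μ : Meas X, μ' ∈ PosMeas X ∧ μ ∈ PosMeas X ∧ μ' ≠ 0 ∧ μ ≠ 0 ∧
      SuppIn μ' h' ∧ SuppIn μ h ∧ p = ((0 : Meas X), μ' - μ)

end

/-!
`\hat P` is a closed convex cone in the weak-star topology, so Farkas' lemma separates `(v, w)`
from it by a continuous functional, and every such functional on a weak-star dual is integration
against continuous functions: `∫ g dΔm + ∫ h dq ≥ 0` on `\hat P` while `∫ g dv + ∫ h dw < 0`.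
Replacing `(η⁰, 1/T⁰)` by `(η⁰ + ε g, 1/T⁰ − ε h)` preserves the Clausius–Duhem inequality, keeps
`1/T` positive for small `ε > 0` by compactness of `X`, and turns the vanishing expression into
`ε (∫ g dv + ∫ h dw) < 0`.
-/

open Topology Filter

theorem WeakDual.exists_apply_eq_apply {𝕜 E : Type*} [NontriviallyNormedField 𝕜]
    [AddCommGroup E] [Module 𝕜 E] [TopologicalSpace E] (φ : StrongDual 𝕜 (WeakDual 𝕜 E)) :
    ∃ g : E, ∀ μ : WeakDual 𝕜 E, φ μ = μ g := by
  obtain ⟨g, rfl⟩ := LinearMap.dualEmbedding_surjective (topDualPairing 𝕜 E) φ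
  exact ⟨g, fun _ => rfl⟩

theorem WeakDual.exists_prod_apply_eq_add {𝕜 E F : Type*} [NontriviallyNormedField 𝕜]
    [AddCommGroup E] [Module 𝕜 E] [TopologicalSpace E]
    [AddCommGroup F] [Module 𝕜 F] [TopologicalSpace F]
    (φ : StrongDual 𝕜 (WeakDual 𝕜 E × WeakDual 𝕜 F)) :
    ∃ (g : E) (h : F), ∀ p : WeakDual 𝕜 E × WeakDual 𝕜 F, φ p = p.1 g + p.2 h := by
  obtain ⟨g, hg⟩ := exists_apply_eq_apply (φ.comp (.inl 𝕜 _ _))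
  obtain ⟨h, hh⟩ := exists_apply_eq_apply (φ.comp (.inr 𝕜 _ _))
  exact ⟨g, h, fun p => by rw [← φ.comp_inl_add_comp_inr, hg, hh]⟩

theorem ContinuousMap.exists_pos_forall_pos_sub_smul {X : Type*} [TopologicalSpace X]
    [CompactSpace X] {f : C(X, ℝ)} (hf : ∀ x, 0 < f x) (h : C(X, ℝ)) :
    ∃ ε : ℝ, 0 < ε ∧ ∀ x, 0 < (f - ε • h) x := by
  have hpos : ∀ᶠ g : C(X, ℝ) in 𝓝 f, MapsTo g univ (Ioi 0) :=
    eventually_mapsTo isCompact_univ isOpen_Ioi fun x _ => hf x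
  have hlim : Tendsto (fun ε : ℝ => f - ε • h) (𝓝[>] 0) (𝓝 f) :=
    ((continuous_const.sub (continuous_id.smul continuous_const)).tendsto' 0 f
      (by simp)).mono_left nhdsWithin_le_nhds
  obtain ⟨ε, hε, hεpos⟩ := ((hlim.eventually hpos).and self_mem_nhdsWithin).exists
  exact ⟨ε, hεpos, fun x => hε (mem_univ x)⟩

section Thermo

variable {X : Type*} [TopologicalSpace X]

lemma subset_hatP (P : Set (VSp X)) : P ⊆ hatP P :=
  fun p hp => subset_closure ⟨1, zero_le_one, p, hp, (one_smul ℝ p).symm⟩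

lemma smul_mem_hatP {P : Set (VSp X)} {p : VSp X} (hp : p ∈ hatP P) {c : ℝ} (hc : 0 ≤ c) :
    c • p ∈ hatP P := by
  refine map_mem_closure (continuous_const_smul c) hp ?_
  rintro q ⟨c', hc', r, hr, rfl⟩
  exact ⟨c * c', mul_nonneg hc hc', r, hr, smul_smul c c' r⟩

lemma IsKelvinPlanck.zero_mem_hatP {P : Set (VSp X)} (hP : IsKelvinPlanck P) :
    (0 : VSp X) ∈ hatP P :=
  (hP.2.symm.subset rfl).1

def hatPCone (P : Set (VSp X)) (hconv : Convex ℝ (hatP P)) (h0 : (0 : VSp X) ∈ hatP P) :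
    ProperCone ℝ (VSp X) where
  carrier := hatP P
  add_mem' {p q} hp hq := by
    have hmid := hconv hp hq (a := 1 / 2) (b := 1 / 2) (by norm_num) (by norm_num) (by norm_num)
    convert smul_mem_hatP hmid (by norm_num : (0 : ℝ) ≤ 2) using 1
    simp only [smul_add, smul_smul]
    norm_num
  zero_mem' := h0
  smul_mem' c _ hp := smul_mem_hatP hp c.2
  isClosed' := isClosed_closure

theorem exists_nonneg_on_hatP_of_not_mem {P : Set (VSp X)} (hconv : Convex ℝ (hatP P))
    (h0 : (0 : VSp X) ∈ hatP P) {v w : Meas X} (hvw : ((v, w) : VSp X) ∉ hatP P) :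
    ∃ g h : C(X, ℝ), (∀ p ∈ hatP P, 0 ≤ p.1 g + p.2 h) ∧ v g + w h < 0 := by
  have : LocallyConvexSpace ℝ (Meas X) := WeakBilin.locallyConvexSpace
  obtain ⟨φ, hφC, hφvw⟩ := (hatPCone P hconv h0).hyperplane_separation_point hvw
  obtain ⟨g, h, hφ⟩ := WeakDual.exists_prod_apply_eq_add φ
  exact ⟨g, h, fun p hp => hφ p ▸ hφC p hp, hφ (v, w) ▸ hφvw⟩

lemma IsCDPair.pos_of_eq_inv {P : Set (VSp X)} {η T β : C(X, ℝ)} (h : IsCDPair P η T)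
    (hβ : ∀ x, β x = (T x)⁻¹) (x : X) : 0 < β x :=
  hβ x ▸ inv_pos.2 (h.1 x)

lemma exists_isCDPair_of_forall_le {P : Set (VSp X)} {η β : C(X, ℝ)} (hβ : ∀ x, 0 < β x)
    (hCD : ∀ p ∈ P, p.2 β ≤ p.1 η) :
    ∃ T : C(X, ℝ), IsCDPair P η T ∧ ∀ x, β x = (T x)⁻¹ := by
  refine ⟨⟨fun x => (β x)⁻¹, β.continuous.inv₀ fun x => (hβ x).ne'⟩,
    ⟨fun x => inv_pos.2 (hβ x), fun β' hβ' => ?_⟩, fun x => (inv_inv _).symm⟩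
  obtain rfl : β' = β := ContinuousMap.ext fun x => by simp [hβ' x]
  exact hCD

end Thermo

theorem cd_pair_with_strict_inequality_of_not_mem_general
    {X : Type*} [TopologicalSpace X] [CompactSpace X]
    (P : Set (VSp X)) (hP : IsKelvinPlanck P)
    (η₀ T₀ β₀ : C(X, ℝ)) (hpair : IsCDPair P η₀ T₀) (hβ₀ : ∀ x, β₀ x = (T₀ x)⁻¹)
    (v w : Meas X)
    (heq : v η₀ - w β₀ = 0)
    (hnot : ((v, w) : VSp X) ∉ hatP P) :
    ∃ η T β : C(X, ℝ), IsCDPair P η T ∧ (∀ x, β x = (T x)⁻¹) ∧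
      v η - w β < 0 := by
  obtain ⟨g, h, hsep, hvw⟩ := exists_nonneg_on_hatP_of_not_mem hP.1.2 hP.zero_mem_hatP hnot
  obtain ⟨ε, hε, hβpos⟩ :=
    ContinuousMap.exists_pos_forall_pos_sub_smul (hpair.pos_of_eq_inv hβ₀) h
  have hCD : ∀ p ∈ P, p.2 (β₀ - ε • h) ≤ p.1 (η₀ + ε • g) := by
    intro p hp
    have hold := hpair.2 β₀ hβ₀ p hp
    have hshift := mul_nonneg hε.le (hsep p (subset_hatP P hp))
    simp only [map_sub, map_add, map_smul, smul_eq_mul]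
    linarith
  obtain ⟨T, hT, hβT⟩ := exists_isCDPair_of_forall_le hβpos hCD
  refine ⟨η₀ + ε • g, T, β₀ - ε • h, hT, hβT, ?_⟩
  have hdrop := mul_neg_of_pos_of_neg hε hvw
  simp only [map_sub, map_add, map_smul, smul_eq_mul]
  linarith

/-- **Lemma.** Let `(X, P)` be a Kelvin–Planck theory with Clausius–Duhem pair
`(η⁰, T⁰)`, and let `(v, w) ∈ V(X)` satisfy `∫ η⁰ dv − ∫ (1/T⁰) dw = 0`.
If `(v, w) ∉ \hat P`, then there is another Clausius–Duhem pair `(η, T)` with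
`∫ η dv − ∫ (1/T) dw < 0`. -/
theorem cd_pair_with_strict_inequality_of_not_mem
    {X : Type*} [TopologicalSpace X] [CompactSpace X] [T2Space X]
    (P : Set (VSp X)) (hP : IsKelvinPlanck P)
    (η₀ T₀ β₀ : C(X, ℝ)) (hpair : IsCDPair P η₀ T₀) (hβ₀ : ∀ x, β₀ x = (T₀ x)⁻¹)
    (v w : Meas X) (hv : v (1 : C(X, ℝ)) = 0)
    (heq : v η₀ - w β₀ = 0)
    (hnot : ((v, w) : VSp X) ∉ hatP P) :
    ∃ η T β : C(X, ℝ), IsCDPair P η T ∧ (∀ x, β x = (T x)⁻¹) ∧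
      v η - w β < 0 :=
  cd_pair_with_strict_inequality_of_not_mem_general P hP η₀ T₀ β₀ hpair hβ₀ v w heq hnot
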